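/- arXiv:1810.03518 — 2 statements merged into one kernel-verified Lean document; each statement's English description precedes it below -/
import Mathlib

section
/- Let E be the exterior algebra over a field of characteristic 0 on generators indexed by disjoint finite sets P1, P2 and an extra generator e_i (disjoint from both), with |P_j| = a_j. Writing C = P1 P2, we have d(C) = d(P1) d(e_i P2) + (-1)^{a_1 a_2} d(P2) d(e_i P1), where d is the graded derivation with d(e_a)=1 on all generators. -/
/-! The graded Leibniz rule gives `d(P₁P₂) = dP₁ · P₂ + (-1)^{a₁} P₁ · dP₂`, and since `d eᵢ = 1`
it also gives `d(eᵢX) = X - eᵢ · dX`. Expand the right-hand side with the latter and reorder factors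
by the super-commutativity `xy = (-1)^{pq} yx` of elements of degrees `p` and `q` (`d` lowers degree
by one): the term `(-1)^{a₁a₂} dP₂ · P₁` becomes `(-1)^{a₁} P₁ · dP₂`, and the two terms containing
`eᵢ` cancel. -/

variable {K : Type} [Field K] [CharZero K] {α : Type} [LinearOrder α]

/-- The generator `e_a` of the exterior algebra indexed by `a`. -/
noncomputable def gen (K : Type) [Field K] {α : Type} (a : α) :
    ExteriorAlgebra K (α →₀ K) :=
  ExteriorAlgebra.ι K (Finsupp.single a (1 : K))

/-- For a finite subset `S = {a₁ < ⋯ < a_p}` of the index set, `eS K S` is the ordered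
wedge product `e_{a₁} ∧ ⋯ ∧ e_{a_p}`. -/
noncomputable def eS (K : Type) [Field K] {α : Type} [LinearOrder α] (S : Finset α) :
    ExteriorAlgebra K (α →₀ K) :=
  ((S.sort (· ≤ ·)).map (fun a => gen K a)).prod

/-- `IsOSDiff d` says that `d` is the Orlik–Solomon boundary map: the linear map with
`d 1 = 0`, `d e_a = 1`, and the graded Leibniz rule. -/
def IsOSDiff (K : Type) [Field K] {α : Type}
    (d : ExteriorAlgebra K (α →₀ K) →ₗ[K] ExteriorAlgebra K (α →₀ K)) : Prop :=
  d 1 = 0 ∧ (∀ a : α, d (gen K a) = 1) ∧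
    ∀ (p : ℕ) (x y : ExteriorAlgebra K (α →₀ K)),
      x ∈ (LinearMap.range (ExteriorAlgebra.ι K (M := α →₀ K)) ^ p :
        Submodule K (ExteriorAlgebra K (α →₀ K))) →
      d (x * y) = d x * y + ((-1 : K) ^ p) • (x * d y)

open ExteriorAlgebra

namespace ExteriorAlgebra

variable {R M : Type*} [CommRing R] [AddCommGroup M] [Module R M]

theorem ι_mul_comm_of_mem_exteriorPower (v : M) {q : ℕ} {y : ExteriorAlgebra R M}
    (hy : y ∈ ⋀[R]^q M) : ι R v * y = (-1 : R) ^ q • (y * ι R v) := by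
  induction hy using Submodule.pow_induction_on_left' with
  | algebraMap r => simp [Algebra.commutes]
  | add x y i _ _ ihx ihy => rw [mul_add, ihx, ihy, add_mul, smul_add]
  | mem_mul m hm i x _ ih =>
    obtain ⟨w, rfl⟩ := hm
    have hanti : ι R v * ι R w = -(ι R w * ι R v) :=
      eq_neg_of_add_eq_zero_left (ι_add_mul_swap v w)
    calc ι R v * (ι R w * x)
        = -(ι R w * (ι R v * x)) := by rw [← mul_assoc, hanti, neg_mul, mul_assoc]
      _ = (-1 : R) ^ (i + 1) • (ι R w * x * ι R v) := by
          rw [ih, mul_smul_comm, mul_assoc, pow_succ, mul_smul, neg_one_smul, smul_neg]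

theorem mul_comm_of_mem_exteriorPower {p q : ℕ} {x y : ExteriorAlgebra R M}
    (hx : x ∈ ⋀[R]^p M) (hy : y ∈ ⋀[R]^q M) : x * y = (-1 : R) ^ (p * q) • (y * x) := by
  induction hx using Submodule.pow_induction_on_left' with
  | algebraMap r => simp [Algebra.commutes]
  | add a b i _ _ iha ihb => rw [add_mul, iha, ihb, mul_add, smul_add]
  | mem_mul m hm i a _ ih =>
    obtain ⟨v, rfl⟩ := hm
    calc ι R v * a * y = (-1 : R) ^ (i * q) • (ι R v * y * a) := by
          rw [mul_assoc, ih, mul_smul_comm, mul_assoc]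
      _ = (-1 : R) ^ ((i + 1) * q) • (y * (ι R v * a)) := by
          rw [ι_mul_comm_of_mem_exteriorPower v hy, smul_mul_assoc, smul_smul, ← pow_add,
            mul_assoc, add_mul, one_mul, add_comm]

end ExteriorAlgebra

theorem gen_mem_exteriorPower_one {F : Type} [Field F] {β : Type} (a : β) :
    gen F a ∈ ⋀[F]^1 (β →₀ F) := by
  rw [exteriorPower, pow_one]
  exact LinearMap.mem_range_self _ _

theorem eS_mem_exteriorPower {F : Type} [Field F] {β : Type} [LinearOrder β] (S : Finset β) :
    eS F S ∈ ⋀[F]^S.card (β →₀ F) := by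
  simpa [eS] using SetLike.list_prod_map_mem_graded (A := fun n : ℕ => ⋀[F]^n (β →₀ F))
    (S.sort (· ≤ ·)) (fun _ => 1) (gen F) fun a _ => gen_mem_exteriorPower_one a

namespace IsOSDiff

variable {F : Type} [Field F] {β : Type}
  {d : ExteriorAlgebra F (β →₀ F) →ₗ[F] ExteriorAlgebra F (β →₀ F)}

theorem map_eq_zero_of_mem_exteriorPower_zero (hd : IsOSDiff F d)
    {x : ExteriorAlgebra F (β →₀ F)} (hx : x ∈ ⋀[F]^0 (β →₀ F)) : d x = 0 := by
  obtain ⟨r, rfl⟩ := Submodule.mem_one.mp (by simpa using hx)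
  rw [Algebra.algebraMap_eq_smul_one, map_smul, hd.1, smul_zero]

theorem map_ι_mem_exteriorPower_zero (hd : IsOSDiff F d) (v : β →₀ F) :
    d (ι F v) ∈ ⋀[F]^0 (β →₀ F) := by
  induction v using Finsupp.induction_linear with
  | zero => simp
  | add v w hv hw => simpa using add_mem hv hw
  | single a c =>
    rw [← mul_one c, ← smul_eq_mul, ← Finsupp.smul_single, map_smul, map_smul]
    have hgen : d (ι F (Finsupp.single a 1)) = 1 := hd.2.1 a
    exact Submodule.smul_mem _ c (hgen ▸ SetLike.one_mem_graded _)

theorem map_gen_mul (hd : IsOSDiff F d) (a : β) (y : ExteriorAlgebra F (β →₀ F)) :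
    d (gen F a * y) = y - gen F a * d y := by
  rw [hd.2.2 1 _ y (gen_mem_exteriorPower_one a), hd.2.1 a, one_mul, pow_one, neg_one_smul,
    sub_eq_add_neg]

theorem map_mem_exteriorPower (hd : IsOSDiff F d) {p : ℕ} {x : ExteriorAlgebra F (β →₀ F)}
    (hx : x ∈ ⋀[F]^(p + 1) (β →₀ F)) : d x ∈ ⋀[F]^p (β →₀ F) := by
  rw [exteriorPower, pow_succ'] at hx
  induction hx using Submodule.mul_induction_on' with
  | add y _ z _ hy hz => exact map_add d y z ▸ add_mem hy hz
  | mem_mul_mem m hm y hy =>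
    rw [hd.2.2 1 m y (by simpa using hm), pow_one, neg_one_smul, ← sub_eq_add_neg]
    refine sub_mem ?_ ?_
    · obtain ⟨v, rfl⟩ := hm
      simpa using SetLike.mul_mem_graded (hd.map_ι_mem_exteriorPower_zero v) hy
    · cases p with
      | zero => simp [hd.map_eq_zero_of_mem_exteriorPower_zero hy]
      | succ p =>
        simpa [add_comm] using
          SetLike.mul_mem_graded (by simpa using hm) (hd.map_mem_exteriorPower hy)

theorem map_mul_comm (hd : IsOSDiff F d) {p r : ℕ} {x z : ExteriorAlgebra F (β →₀ F)}
    (hx : x ∈ ⋀[F]^p (β →₀ F)) (hz : z ∈ ⋀[F]^r (β →₀ F)) :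
    d x * z = (-1 : F) ^ ((p + 1) * r) • (z * d x) := by
  cases p with
  | zero => simp [hd.map_eq_zero_of_mem_exteriorPower_zero hx]
  | succ p =>
    rw [mul_comm_of_mem_exteriorPower (hd.map_mem_exteriorPower hx) hz]
    congr 1
    exact neg_one_pow_congr (by simp only [Nat.even_mul, Nat.even_add_one]; tauto)

theorem map_mul_map_comm (hd : IsOSDiff F d) {p q : ℕ} {x y : ExteriorAlgebra F (β →₀ F)}
    (hx : x ∈ ⋀[F]^p (β →₀ F)) (hy : y ∈ ⋀[F]^q (β →₀ F)) :
    d y * d x = (-1 : F) ^ ((p + 1) * (q + 1)) • (d x * d y) := by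
  cases p with
  | zero => simp [hd.map_eq_zero_of_mem_exteriorPower_zero hx]
  | succ p =>
    rw [hd.map_mul_comm hy (hd.map_mem_exteriorPower hx)]
    congr 1
    exact neg_one_pow_congr (by simp only [Nat.even_mul, Nat.even_add_one]; tauto)

theorem map_mul_eq_add_map_gen_mul (hd : IsOSDiff F d) (a : β) {p q : ℕ}
    {x y : ExteriorAlgebra F (β →₀ F)} (hx : x ∈ ⋀[F]^p (β →₀ F)) (hy : y ∈ ⋀[F]^q (β →₀ F)) :
    d (x * y) = d x * d (gen F a * y) + (-1 : F) ^ (p * q) • (d y * d (gen F a * x)) := by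
  have he := gen_mem_exteriorPower_one (F := F) a
  have hswap : (-1 : F) ^ (p * q) • (d y * x) = (-1 : F) ^ p • (x * d y) := by
    rw [hd.map_mul_comm hy hx, smul_smul, ← pow_add]
    congr 1
    exact neg_one_pow_congr (by simp only [Nat.even_add, Nat.even_mul, Nat.even_add_one]; tauto)
  have hcancel : (-1 : F) ^ (p * q) • (d y * (gen F a * d x)) = -(d x * (gen F a * d y)) := by
    rw [← mul_assoc, ← mul_assoc, hd.map_mul_comm hy he, hd.map_mul_comm hx he]
    simp only [smul_mul_assoc, mul_assoc, hd.map_mul_map_comm hx hy, mul_smul_comm, smul_smul,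
      ← neg_smul]
    congr 1
    rw [← pow_add, ← pow_add, ← neg_one_mul ((-1 : F) ^ ((p + 1) * 1)), ← pow_succ']
    exact neg_one_pow_congr (by simp only [Nat.even_add, Nat.even_mul, Nat.even_add_one]; tauto)
  rw [hd.2.2 p x y hx, hd.map_gen_mul, hd.map_gen_mul, mul_sub, mul_sub, smul_sub, hswap, hcancel]
  abel

end IsOSDiff

theorem stmt4_general
    (d : ExteriorAlgebra K (α →₀ K) →ₗ[K] ExteriorAlgebra K (α →₀ K))
    (hd : IsOSDiff K d) (i : α) (P1 P2 : Finset α) :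
    d (eS K P1 * eS K P2) =
        d (eS K P1) * d (gen K i * eS K P2)
      + ((-1 : K) ^ (P1.card * P2.card)) • (d (eS K P2) * d (gen K i * eS K P1)) :=
  hd.map_mul_eq_add_map_gen_mul i (eS_mem_exteriorPower P1) (eS_mem_exteriorPower P2)

/-- For a cycle `C = P1 P2` with chord `i`:
`d(C) = d(P1) d(e_i P2) + (-1)^{a1 a2} d(P2) d(e_i P1)`. -/
theorem stmt4 [Fintype α]
    (d : ExteriorAlgebra K (α →₀ K) →ₗ[K] ExteriorAlgebra K (α →₀ K))
    (hd : IsOSDiff K d) (i : α) (P1 P2 : Finset α)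
    (h12 : Disjoint P1 P2) (hi1 : i ∉ P1) (hi2 : i ∉ P2) :
    d (eS K P1 * eS K P2) =
        d (eS K P1) * d (gen K i * eS K P2)
      + ((-1 : K) ^ (P1.card * P2.card)) • (d (eS K P2) * d (gen K i * eS K P1)) :=
  stmt4_general d hd i P1 P2
end

section
/- Let G = (V,E) be a finite connected simple graph, B ⊆ V an independent set with |B| ≥ 2, and Ĝ the graph obtained by adding all edges between pairs of boundary nodes. If Ĝ has a chordless cycle Z of length ≥ 4, then either Z ⊆ E and Z is a cycle of G meeting at most one boundary node with no chord in G, or Z contains exactly one added edge e and Z ∖ {e} is a crossing of (G,B) of length ≥ 3 with no chord. -/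
open SimpleGraph

variable {V : Type}

/-- A *crossing* of `(G, B)` is a minimal path between two distinct boundary nodes,
i.e. a path whose endpoints are distinct boundary nodes and whose interior vertices
are not boundary nodes. -/
def IsCrossing (G : SimpleGraph V) (B : Set V) {a b : V} (p : G.Walk a b) : Prop :=
  p.IsPath ∧ a ∈ B ∧ b ∈ B ∧ a ≠ b ∧ ∀ v ∈ p.support, v ∈ B → v = a ∨ v = b

/-- The graph `Ĝ` obtained from `G` by adding an edge between every pair of distinct
boundary nodes. -/
def GHat (G : SimpleGraph V) (B : Set V) : SimpleGraph V :=
  G ⊔ SimpleGraph.fromRel (fun a b => a ∈ B ∧ b ∈ B)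

/-- A graph is *chordal* if every cycle of length at least 4 has a chord: an edge of the
graph joining two vertices of the cycle that is not an edge of the cycle. -/
def IsChordal (G : SimpleGraph V) : Prop :=
  ∀ (v : V) (p : G.Walk v v), p.IsCycle → 4 ≤ p.length →
    ∃ a b, G.Adj a b ∧ a ∈ p.support ∧ b ∈ p.support ∧ s(a, b) ∉ p.edges

/-!
If every edge of the cycle `Z` lies in `G`, two boundary nodes on `Z` would be joined by an added
edge, which by chordlessness is an edge of `Z`, contradicting the independence of `B`. Otherwise
`Z` uses an added edge `ab`. A further boundary node `x` on `Z` would be adjacent in `Ĝ` to `a`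
and `b`, so `Z` would be the triangle `abx`; hence `a` and `b` are the only boundary nodes on `Z`,
`ab` is its only added edge, and removing it leaves a path of `G` from `a` to `b`: a crossing,
each of whose chords would be a chord of `Z`.
-/

namespace SimpleGraph.Walk

variable {H : SimpleGraph V}

lemma edges_eq_cons_edges_tail {u v : V} {p : H.Walk u v} (hp : ¬p.Nil) :
    p.edges = s(u, p.snd) :: p.tail.edges := by
  rw [← edges_cons (p.adj_snd hp), p.cons_tail_eq hp]

lemma IsCycle.eq_snd_or_eq_penultimate_of_mem_edges {u w : V} {c : H.Walk u u}
    (hc : c.IsCycle) (he : s(u, w) ∈ c.edges) : w = c.snd ∨ w = c.penultimate := by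
  rw [edges_eq_cons_edges_tail hc.not_nil, List.mem_cons] at he
  rcases he with he | he
  · exact Or.inl (Sym2.congr_right.mp he)
  · right
    rw [hc.isPath_tail.eq_penultimate_of_mem_edges he, penultimate, penultimate, getVert_tail,
      length_tail]
    have := hc.three_le_length
    congr 1
    omega

lemma IsCycle.exists_isPath_edges_perm {u w : V} {c : H.Walk u u} (hc : c.IsCycle)
    (he : s(u, w) ∈ c.edges) :
    ∃ q : H.Walk w u, q.IsPath ∧ c.edges.Perm (s(u, w) :: q.edges) ∧
      ∀ x ∈ q.support, x ∈ c.support := by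
  have tail_spec : ∀ {c : H.Walk u u}, c.IsCycle →
      c.tail.IsPath ∧ c.edges = s(u, c.snd) :: c.tail.edges ∧
        ∀ x ∈ c.tail.support, x ∈ c.support := fun {c} hc =>
    ⟨hc.isPath_tail, edges_eq_cons_edges_tail hc.not_nil,
      fun _ hx => List.mem_of_mem_tail (support_tail_of_not_nil _ hc.not_nil ▸ hx)⟩
  have hw := hc.eq_snd_or_eq_penultimate_of_mem_edges he
  rw [← snd_reverse] at hw
  rcases hw with rfl | rfl
  · obtain ⟨hpath, hedges, hsupp⟩ := tail_spec hc
    exact ⟨c.tail, hpath, hedges ▸ List.Perm.refl _, hsupp⟩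
  · obtain ⟨hpath, hedges, hsupp⟩ := tail_spec hc.reverse
    refine ⟨_, hpath, ?_, fun x hx => by simpa using hsupp x hx⟩
    rw [← hedges, edges_reverse]
    exact (List.reverse_perm _).symm

lemma IsCycle.exists_isPath_of_mem_edges {v a b : V} {c : H.Walk v v} (hc : c.IsCycle)
    (he : s(a, b) ∈ c.edges) :
    ∃ q : H.Walk a b, q.IsPath ∧ q.length + 1 = c.length ∧
      (∀ f, f ∈ q.edges ↔ f ∈ c.edges ∧ f ≠ s(a, b)) ∧ ∀ x ∈ q.support, x ∈ c.support := by
  classical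
  have ha := c.fst_mem_support_of_mem_edges he
  have hrot := c.rotate_edges a ha
  obtain ⟨q, hq, hperm, hsupp⟩ :=
    (hc.rotate ha).exists_isPath_edges_perm (hrot.mem_iff.mpr he)
  have hperm' : c.edges.Perm (s(a, b) :: q.edges) := hrot.perm.symm.trans hperm
  have hnodup : (s(a, b) :: q.edges).Nodup := hperm'.nodup_iff.mp hc.edges_nodup
  refine ⟨q.reverse, hq.reverse, ?_, fun f => ?_, fun x hx => ?_⟩
  · simpa [← length_edges] using hperm'.length_eq.symm
  · rw [edges_reverse, List.mem_reverse, hperm'.mem_iff, List.mem_cons]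
    have := (List.nodup_cons.mp hnodup).1
    grind
  · rw [support_reverse, List.mem_reverse] at hx
    exact (c.mem_support_rotate_iff a ha).mp (hsupp x hx)

lemma IsCycle.length_eq_three_of_mem_edges {v a b x : V} {c : H.Walk v v} (hc : c.IsCycle)
    (hab : s(a, b) ∈ c.edges) (hax : s(a, x) ∈ c.edges) (hbx : s(b, x) ∈ c.edges) :
    c.length = 3 := by
  have hne : ∀ {y z}, s(y, z) ∈ c.edges → y ≠ z := fun h => (c.adj_of_mem_edges h).ne
  obtain ⟨q, hq, hlen, hedges, -⟩ := hc.exists_isPath_of_mem_edges hab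
  have hax' : s(a, x) ∈ q.edges := (hedges _).mpr ⟨hax, by grind [hne hbx]⟩
  have hqx : x = q.snd := hq.eq_snd_of_mem_edges hax'
  subst hqx
  have hnil : ¬q.Nil := by rw [← length_eq_zero_iff]; have := hc.three_le_length; omega
  have hbx' : s(q.snd, b) ∈ q.tail.edges := by
    have := (hedges _).mpr ⟨hbx, by grind [hne hab]⟩
    rw [edges_eq_cons_edges_tail hnil, List.mem_cons] at this
    grind [hne hab, hne hbx]
  have := hq.tail.length_eq_one_of_mem_edges hbx'
  grind [length_tail_add_one hnil]

end SimpleGraph.Walk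

section GHat

variable {G : SimpleGraph V} {B : Set V}

lemma gHat_adj_iff {x y : V} : (GHat G B).Adj x y ↔ G.Adj x y ∨ x ≠ y ∧ x ∈ B ∧ y ∈ B := by
  simp only [GHat, sup_adj, fromRel_adj]
  tauto

lemma le_gHat : G ≤ GHat G B := le_sup_left

lemma mem_of_mem_edgeSet_gHat {e : Sym2 V} (he : e ∈ (GHat G B).edgeSet)
    (heG : e ∉ G.edgeSet) : ∀ x ∈ e, x ∈ B := by
  induction e using Sym2.ind with
  | _ x y =>
    rcases gHat_adj_iff.mp he with h | ⟨-, hx, hy⟩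
    · exact absurd h heG
    · simp [hx, hy]

variable {v : V} {p : (GHat G B).Walk v v}

lemma eq_of_mem_support_of_edges_subset
    (hchord : ∀ x ∈ p.support, ∀ y ∈ p.support, (GHat G B).Adj x y → s(x, y) ∈ p.edges)
    (hind : ∀ a ∈ B, ∀ b ∈ B, ¬G.Adj a b) (hG : ∀ e ∈ p.edges, e ∈ G.edgeSet)
    {x y : V} (hx : x ∈ p.support) (hxB : x ∈ B) (hy : y ∈ p.support) (hyB : y ∈ B) :
    x = y := by
  by_contra hxy
  exact hind x hxB y hyB (hG _ (hchord x hx y hy (gHat_adj_iff.mpr (Or.inr ⟨hxy, hxB, hyB⟩))))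

lemma eq_or_eq_of_mem_support_of_mem {a b : V} (hc : p.IsCycle) (hlen : 4 ≤ p.length)
    (hchord : ∀ x ∈ p.support, ∀ y ∈ p.support, (GHat G B).Adj x y → s(x, y) ∈ p.edges)
    (he : s(a, b) ∈ p.edges) (heG : s(a, b) ∉ G.edgeSet) {x : V} (hx : x ∈ p.support)
    (hxB : x ∈ B) : x = a ∨ x = b := by
  have hB := mem_of_mem_edgeSet_gHat (p.edges_subset_edgeSet he) heG
  by_contra! hxab
  have chord_to {y : V} (hy : y ∈ p.support) (hyB : y ∈ B) (hyx : y ≠ x) : s(y, x) ∈ p.edges :=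
    hchord y hy x hx (gHat_adj_iff.mpr (Or.inr ⟨hyx, hyB, hxB⟩))
  have := hc.length_eq_three_of_mem_edges he
    (chord_to (p.fst_mem_support_of_mem_edges he) (hB a (Sym2.mem_mk_left a b)) hxab.1.symm)
    (chord_to (p.snd_mem_support_of_mem_edges he) (hB b (Sym2.mem_mk_right a b)) hxab.2.symm)
  omega

lemma eq_of_mem_edges_of_notMem_edgeSet {a b : V} (hc : p.IsCycle) (hlen : 4 ≤ p.length)
    (hchord : ∀ x ∈ p.support, ∀ y ∈ p.support, (GHat G B).Adj x y → s(x, y) ∈ p.edges)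
    (he : s(a, b) ∈ p.edges) (heG : s(a, b) ∉ G.edgeSet) :
    ∀ e ∈ p.edges, e ∉ G.edgeSet → e = s(a, b) := by
  intro e he' he'G
  induction e using Sym2.ind with
  | _ x y =>
    have hB := mem_of_mem_edgeSet_gHat (p.edges_subset_edgeSet he') he'G
    have hxy := (p.adj_of_mem_edges he').ne
    have hx := eq_or_eq_of_mem_support_of_mem hc hlen hchord he heG
      (p.fst_mem_support_of_mem_edges he') (hB x (Sym2.mem_mk_left x y))
    have hy := eq_or_eq_of_mem_support_of_mem hc hlen hchord he heG
      (p.snd_mem_support_of_mem_edges he') (hB y (Sym2.mem_mk_right x y))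
    rcases hx with rfl | rfl <;> rcases hy with rfl | rfl <;> simp_all [Sym2.eq_swap]

lemma exists_isCrossing_of_notMem_edgeSet {a b : V} (hc : p.IsCycle) (hlen : 4 ≤ p.length)
    (hchord : ∀ x ∈ p.support, ∀ y ∈ p.support, (GHat G B).Adj x y → s(x, y) ∈ p.edges)
    (he : s(a, b) ∈ p.edges) (heG : s(a, b) ∉ G.edgeSet) :
    ∃ q : G.Walk a b, IsCrossing G B q ∧ 3 ≤ q.length ∧
      (∀ f, f ∈ q.edges ↔ f ∈ p.edges ∧ f ≠ s(a, b)) ∧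
      ¬∃ x y, G.Adj x y ∧ x ∈ q.support ∧ y ∈ q.support ∧ s(x, y) ∉ q.edges := by
  obtain ⟨q, hq, hqlen, hqedges, hqsupp⟩ := hc.exists_isPath_of_mem_edges he
  have hqG : ∀ f ∈ q.edges, f ∈ G.edgeSet := fun f hf => by
    by_contra hfG
    obtain ⟨hfp, hfab⟩ := (hqedges f).mp hf
    exact hfab (eq_of_mem_edges_of_notMem_edgeSet hc hlen hchord he heG f hfp hfG)
  have hB := mem_of_mem_edgeSet_gHat (p.edges_subset_edgeSet he) heG
  refine ⟨q.transfer G hqG, ⟨hq.transfer hqG, hB a (Sym2.mem_mk_left a b),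
    hB b (Sym2.mem_mk_right a b), (p.adj_of_mem_edges he).ne, fun x hx hxB => ?_⟩, ?_, ?_, ?_⟩
  · rw [Walk.support_transfer] at hx
    exact eq_or_eq_of_mem_support_of_mem hc hlen hchord he heG (hqsupp x hx) hxB
  · rw [Walk.length_transfer]
    omega
  · simpa only [Walk.edges_transfer] using hqedges
  · rintro ⟨x, y, hxy, hx, hy, hne⟩
    rw [Walk.support_transfer] at hx hy
    rw [Walk.edges_transfer, hqedges] at hne
    refine hne ⟨hchord x (hqsupp x hx) y (hqsupp y hy) (le_gHat hxy), ?_⟩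
    intro hxyab
    exact heG (hxyab ▸ G.mem_edgeSet.mpr hxy)

end GHat

theorem stmt17_general (G : SimpleGraph V)
    (B : Set V) (hind : ∀ a ∈ B, ∀ b ∈ B, ¬G.Adj a b)
    (v : V) (p : (GHat G B).Walk v v) (hc : p.IsCycle) (hlen : 4 ≤ p.length)
    (hchordless : ¬∃ a b, (GHat G B).Adj a b ∧ a ∈ p.support ∧ b ∈ p.support ∧
      s(a, b) ∉ p.edges) :
    ((∀ e ∈ p.edges, e ∈ G.edgeSet) ∧
      (∀ x ∈ p.support, x ∈ B → ∀ y ∈ p.support, y ∈ B → x = y) ∧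
      ¬∃ a b, G.Adj a b ∧ a ∈ p.support ∧ b ∈ p.support ∧ s(a, b) ∉ p.edges) ∨
    (∃ e ∈ p.edges, e ∉ G.edgeSet ∧ (∀ e' ∈ p.edges, e' ∉ G.edgeSet → e' = e) ∧
      ∃ (a b : V) (q : G.Walk a b), IsCrossing G B q ∧ 3 ≤ q.length ∧
        (∀ x, x ∈ q.edges ↔ x ∈ p.edges ∧ x ≠ e) ∧
        ¬∃ x y, G.Adj x y ∧ x ∈ q.support ∧ y ∈ q.support ∧ s(x, y) ∉ q.edges) := by
  have hchord : ∀ x ∈ p.support, ∀ y ∈ p.support, (GHat G B).Adj x y → s(x, y) ∈ p.edges :=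
    fun x hx y hy hxy => by_contra fun hne => hchordless ⟨x, y, hxy, hx, hy, hne⟩
  by_cases hG : ∀ e ∈ p.edges, e ∈ G.edgeSet
  · refine Or.inl ⟨hG, fun x hx hxB y hy hyB =>
      eq_of_mem_support_of_edges_subset hchord hind hG hx hxB hy hyB, ?_⟩
    rintro ⟨x, y, hxy, hx, hy, hne⟩
    exact hne (hchord x hx y hy (le_gHat hxy))
  · push Not at hG
    obtain ⟨e, he, heG⟩ := hG
    induction e using Sym2.ind with
    | _ a b =>
      exact Or.inr ⟨s(a, b), he, heG, eq_of_mem_edges_of_notMem_edgeSet hc hlen hchord he heG,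
        a, b, exists_isCrossing_of_notMem_edgeSet hc hlen hchord he heG⟩

/-- Any chordless cycle of `Ĝ` of length ≥ 4 is either a chordless cycle of `G` meeting at
most one boundary node, or consists of exactly one added edge `e` together with a chordless
crossing of `(G, B)` of length ≥ 3. -/
theorem stmt17 [Fintype V] (G : SimpleGraph V) (hconn : G.Connected)
    (B : Set V) (hB : 2 ≤ B.ncard) (hind : ∀ a ∈ B, ∀ b ∈ B, ¬G.Adj a b)
    (v : V) (p : (GHat G B).Walk v v) (hc : p.IsCycle) (hlen : 4 ≤ p.length)
    (hchordless : ¬∃ a b, (GHat G B).Adj a b ∧ a ∈ p.support ∧ b ∈ p.support ∧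
      s(a, b) ∉ p.edges) :
    ((∀ e ∈ p.edges, e ∈ G.edgeSet) ∧
      (∀ x ∈ p.support, x ∈ B → ∀ y ∈ p.support, y ∈ B → x = y) ∧
      ¬∃ a b, G.Adj a b ∧ a ∈ p.support ∧ b ∈ p.support ∧ s(a, b) ∉ p.edges) ∨
    (∃ e ∈ p.edges, e ∉ G.edgeSet ∧ (∀ e' ∈ p.edges, e' ∉ G.edgeSet → e' = e) ∧
      ∃ (a b : V) (q : G.Walk a b), IsCrossing G B q ∧ 3 ≤ q.length ∧
        (∀ x, x ∈ q.edges ↔ x ∈ p.edges ∧ x ≠ e) ∧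
        ¬∃ x y, G.Adj x y ∧ x ∈ q.support ∧ y ∈ q.support ∧ s(x, y) ∉ q.edges) :=
  stmt17_general G B hind v p hc hlen hchordless
end
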